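/- arXiv:1609.07639 — 6 statements merged into one kernel-verified Lean document; each statement's English description precedes it below -/
import Mathlib

section
/- Let c be a 2-coloring of [1,n]. Define N⁻ = {(x,y) : 1 ≤ y < x ≤ n, x+y ≤ n, c(x) ≠ c(y)} and N⁺ = {(x,y) : 1 ≤ x < y ≤ n, x+y > n, c(x) ≠ c(y)}. Then |N⁻| + |N⁺| differs from μ_R·μ_B by at most n, where μ_R and μ_B are the numbers of red and blue elements respectively. (Precisely: |μ_R·μ_B − (|N⁻| + |N⁺|)| ≤ n.) -/
open Finset

/-- |N⁻| + |N⁺| differs from μ_R·μ_B by at most n. -/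
theorem Nminus_plus_Nplus_approx (n : ℕ) (c : ℕ → Bool) :
    |(((Finset.Icc 1 n).filter (fun i => c i = false)).card
        * ((Finset.Icc 1 n).filter (fun i => c i = true)).card : ℤ)
      - ((((Finset.Icc 1 n ×ˢ Finset.Icc 1 n).filter
            (fun p => p.2 < p.1 ∧ p.1 + p.2 ≤ n ∧ c p.1 ≠ c p.2)).card : ℤ)
        + (((Finset.Icc 1 n ×ˢ Finset.Icc 1 n).filter
            (fun p => p.1 < p.2 ∧ n < p.1 + p.2 ∧ c p.1 ≠ c p.2)).card : ℤ))|
      ≤ (n : ℤ) := by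
  classical
  set s := Finset.Icc 1 n with hs
  set A := s.filter (fun i => c i = false) with hA
  set B := s.filter (fun i => c i = true) with hB
  set N1 := (s ×ˢ s).filter (fun p => p.2 < p.1 ∧ p.1 + p.2 ≤ n ∧ c p.1 ≠ c p.2) with hN1
  set N2 := (s ×ˢ s).filter (fun p => p.1 < p.2 ∧ n < p.1 + p.2 ∧ c p.1 ≠ c p.2) with hN2
  set N1' := (s ×ˢ s).filter (fun p => p.1 < p.2 ∧ p.1 + p.2 ≤ n ∧ c p.1 ≠ c p.2) with hN1'
  set N2' := (s ×ˢ s).filter (fun p => p.2 < p.1 ∧ n < p.1 + p.2 ∧ c p.1 ≠ c p.2) with hN2'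
  -- swap card lemma
  have hswap : ∀ (P : ℕ × ℕ → Prop) [DecidablePred P],
      ((s ×ˢ s).filter P).card = ((s ×ˢ s).filter (fun p => P (p.2, p.1))).card := by
    intro P _
    apply Finset.card_nbij' (fun p => (p.2, p.1)) (fun p => (p.2, p.1))
    · intro p hp
      simp only [mem_coe, mem_filter, mem_product] at hp ⊢
      exact ⟨⟨hp.1.2, hp.1.1⟩, hp.2⟩
    · intro p hp
      simp only [mem_coe, mem_filter, mem_product] at hp ⊢
      exact ⟨⟨hp.1.2, hp.1.1⟩, hp.2⟩
    · intro p _; rfl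
    · intro p _; rfl
  have h11 : N1.card = N1'.card := by
    rw [hN1, hswap (fun p => p.2 < p.1 ∧ p.1 + p.2 ≤ n ∧ c p.1 ≠ c p.2), hN1']
    congr 1
    apply Finset.filter_congr
    intro p _
    constructor
    · rintro ⟨h1, h2, h3⟩; exact ⟨h1, by omega, fun e => h3 e.symm⟩
    · rintro ⟨h1, h2, h3⟩; exact ⟨h1, by omega, fun e => h3 e.symm⟩
  have h22 : N2.card = N2'.card := by
    rw [hN2, hswap (fun p => p.1 < p.2 ∧ n < p.1 + p.2 ∧ c p.1 ≠ c p.2), hN2']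
    congr 1
    apply Finset.filter_congr
    intro p _
    constructor
    · rintro ⟨h1, h2, h3⟩; exact ⟨h1, by omega, fun e => h3 e.symm⟩
    · rintro ⟨h1, h2, h3⟩; exact ⟨h1, by omega, fun e => h3 e.symm⟩
  -- total split of bichromatic pairs
  have total : ((s ×ˢ s).filter (fun p => c p.1 ≠ c p.2)).card
      = N1.card + N1'.card + N2'.card + N2.card := by
    simp only [hN1, hN1', hN2, hN2', Finset.card_filter]
    rw [← Finset.sum_add_distrib, ← Finset.sum_add_distrib, ← Finset.sum_add_distrib]
    apply Finset.sum_congr rfl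
    intro p _
    by_cases h : c p.1 = c p.2
    · simp only [ne_eq, h, not_true_eq_false, and_false, if_false, false_and]
    · have hne : p.1 ≠ p.2 := fun e => h (by rw [e])
      simp only [ne_eq, h, not_false_eq_true, and_true]
      split_ifs <;> omega
  -- bichromatic pairs counted by colors
  have hprodF : (s ×ˢ s).filter (fun p => c p.1 = false ∧ c p.2 = true) = A ×ˢ B := by
    ext p; simp only [hA, hB, mem_filter, mem_product]; tauto
  have hprodT : (s ×ˢ s).filter (fun p => c p.1 = true ∧ c p.2 = false) = B ×ˢ A := by
    ext p; simp only [hA, hB, mem_filter, mem_product]; tauto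
  have colorsplit : ((s ×ˢ s).filter (fun p => c p.1 ≠ c p.2)).card
      = A.card * B.card + B.card * A.card := by
    have : (s ×ˢ s).filter (fun p => c p.1 ≠ c p.2)
        = ((s ×ˢ s).filter (fun p => c p.1 = false ∧ c p.2 = true))
          ∪ ((s ×ˢ s).filter (fun p => c p.1 = true ∧ c p.2 = false)) := by
      rw [← Finset.filter_or]
      apply Finset.filter_congr
      intro p _
      cases hc1 : c p.1 <;> cases hc2 : c p.2 <;> simp only [hc1, hc2] <;> decide
    have hdis : Disjoint ((s ×ˢ s).filter (fun p => c p.1 = false ∧ c p.2 = true))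
        ((s ×ˢ s).filter (fun p => c p.1 = true ∧ c p.2 = false)) := by
      rw [Finset.disjoint_left]
      intro p hp hq
      simp only [mem_filter] at hp hq
      exact Bool.false_ne_true (hp.2.1.symm.trans hq.2.1)
    rw [this, Finset.card_union_of_disjoint hdis, hprodF, hprodT,
      Finset.card_product, Finset.card_product]
  have key : A.card * B.card = N1.card + N2.card := by
    have h2 : 2 * (A.card * B.card) = 2 * (N1.card + N2.card) := by
      have := total
      rw [colorsplit, Nat.mul_comm B.card A.card] at this
      omega
    omega
  have keyZ : ((A.card : ℤ) * B.card) = (N1.card : ℤ) + N2.card := by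
    exact_mod_cast key
  rw [keyZ]
  simp
end

section
/- For the 2-coloring of [1,n] (n divisible by 11) given by [R^{4n/11}, B^{6n/11}, R^{n/11}] (first 4n/11 integers red, next 6n/11 blue, last n/11 red), every monochromatic Schur triple (x, y, x+y) is either entirely red or has all three elements in the blue middle block; moreover there are no monochromatic blue Schur triples with x+y > 10n/11. -/
/-- For the coloring [R^{4n/11}, B^{6n/11}, R^{n/11}], every monochromatic Schur
triple is all red or lies entirely in the blue middle block; in particular there are
no blue monochromatic Schur triples with x+y > 10n/11. -/
theorem optimal_coloring_structure (n : ℕ) (hn : 11 ∣ n)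
    (c : ℕ → Bool)
    (hc : ∀ i, 1 ≤ i → i ≤ n →
      (c i = true ↔ (4 * n / 11 < i ∧ i ≤ 10 * n / 11))) :
    ∀ x y : ℕ, 1 ≤ x → 1 ≤ y → x + y ≤ n →
      c x = c y → c y = c (x + y) →
      ((c x = false ∧ c y = false ∧ c (x + y) = false)
        ∨ (4 * n / 11 < x ∧ x ≤ 10 * n / 11 ∧ 4 * n / 11 < y ∧ y ≤ 10 * n / 11
            ∧ 4 * n / 11 < x + y ∧ x + y ≤ 10 * n / 11))
      ∧ (c x = true → x + y ≤ 10 * n / 11) := by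
  intro x y hx hy hxy hcxy hcyz
  have hxn : x ≤ n := le_trans (Nat.le_add_right x y) hxy
  have hyn : y ≤ n := le_trans (Nat.le_add_left y x) hxy
  have hzn : (1 : ℕ) ≤ x + y := le_trans hx (Nat.le_add_right x y)
  cases hcx : c x with
  | false =>
    refine ⟨Or.inl ⟨rfl, ?_, ?_⟩, fun h => by simp [hcx] at h⟩
    · rw [← hcxy, hcx]
    · rw [← hcyz, ← hcxy, hcx]
  | true =>
    have h1 := (hc x hx hxn).mp hcx
    have h2 := (hc y hy hyn).mp (by rw [← hcxy, hcx])
    have h3 := (hc (x + y) hzn hxy).mp (by rw [← hcyz, ← hcxy, hcx])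
    exact ⟨Or.inr ⟨h1.1, h1.2, h2.1, h2.2, h3.1, h3.2⟩, fun _ => h3.2⟩
end

section
/- For any 2-coloring c of [1,n] with μ_R red and μ_B blue elements, the number of ordered pairs (x,z) ∈ [1,n]² with x < z, z ≡ x (mod 2), and c(x) ≠ c(z) is at most μ_R·μ_B/2 + n. -/
theorem parity_count (n : ℕ) : ((Finset.Icc 1 n).filter (fun i => i % 2 = 0)).card = n/2 ∧
    ((Finset.Icc 1 n).filter (fun i => i % 2 = 1)).card = (n+1)/2 := by
  induction n with
  | zero => simp
  | succ n ih =>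
    rw [← Finset.insert_Icc_right_eq_Icc_add_one (by omega), Finset.filter_insert, Finset.filter_insert]
    rcases Nat.even_or_odd (n+1) with h | h
    · obtain ⟨k, hk⟩ := h
      rw [if_pos (by omega), if_neg (by omega),
        Finset.card_insert_of_notMem (by simp), ih.1, ih.2]
      omega
    · obtain ⟨k, hk⟩ := h
      rw [if_neg (by omega), if_pos (by omega),
        Finset.card_insert_of_notMem (by simp), ih.1, ih.2]
      omega

theorem step1 (n : ℕ) (c : ℕ → Bool) :
    (((Finset.Icc 1 n ×ˢ Finset.Icc 1 n).filter
        (fun p => p.1 < p.2 ∧ p.1 % 2 = p.2 % 2 ∧ c p.1 ≠ c p.2)).card)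
    = ((((Finset.Icc 1 n).filter (fun i => c i = true)) ×ˢ
        ((Finset.Icc 1 n).filter (fun i => c i = false))).filter
        (fun p => p.1 % 2 = p.2 % 2)).card := by
  refine Finset.card_bij' (fun p _ => if c p.1 = true then p else p.swap)
    (fun q _ => if q.1 < q.2 then q else q.swap) ?hi ?hj ?left ?right
  case hi =>
    rintro ⟨a, b⟩ hp
    simp only [Finset.mem_filter, Finset.mem_product] at hp ⊢
    obtain ⟨⟨ha, hb⟩, hlt, hpar, hne⟩ := hp
    by_cases h : c a = true
    · have hb' : c b = false := by
        cases hcb : c b <;> simp [hcb, h] at hne ⊢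
      simp [h, ha, hb, hb', hpar]
    · have ha' : c a = false := by cases hca : c a <;> simp_all
      have hb' : c b = true := by
        cases hcb : c b <;> simp [hcb, ha'] at hne ⊢
      simp [h, ha, hb, ha', hb', Prod.swap, hpar.symm]
  case hj =>
    rintro ⟨a, b⟩ hq
    simp only [Finset.mem_filter, Finset.mem_product] at hq ⊢
    obtain ⟨⟨⟨ha, hca⟩, hb, hcb⟩, hpar⟩ := hq
    have hne : a ≠ b := by intro h; rw [h, hcb] at hca; exact Bool.noConfusion hca
    by_cases h : a < b
    · simp [h, ha, hb, hpar, hca, hcb]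
    · have h' : b < a := by omega
      simp [h, h', ha, hb, Prod.swap, hpar.symm, hca, hcb]
  case left =>
    rintro ⟨a, b⟩ hp
    simp only [Finset.mem_filter, Finset.mem_product] at hp
    obtain ⟨⟨ha, hb⟩, hlt, hpar, hne⟩ := hp
    by_cases h : c a = true
    · simp [h, hlt]
    · simp [h, Prod.swap, not_lt.2 hlt.le]
  case right =>
    rintro ⟨a, b⟩ hq
    simp only [Finset.mem_filter, Finset.mem_product] at hq
    obtain ⟨⟨⟨ha, hca⟩, hb, hcb⟩, hpar⟩ := hq
    by_cases h : a < b
    · simp [h, hca]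
    · simp [h, Prod.swap, hcb]

theorem card_filter_partition (s : Finset ℕ) (P Q R : ℕ → Prop)
    [DecidablePred P] [DecidablePred Q] [DecidablePred R]
    (h : ∀ i, P i ↔ (Q i ∨ R i)) (hd : ∀ i, ¬(Q i ∧ R i)) :
    (s.filter P).card = (s.filter Q).card + (s.filter R).card := by
  have hu : s.filter P = s.filter Q ∪ s.filter R := by
    ext i
    simp only [Finset.mem_filter, Finset.mem_union]
    constructor
    · rintro ⟨hi, hP⟩
      rcases (h i).1 hP with h'|h'
      · exact Or.inl ⟨hi, h'⟩
      · exact Or.inr ⟨hi, h'⟩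
    · rintro (⟨hi, h'⟩|⟨hi, h'⟩) <;> exact ⟨hi, (h i).2 (by tauto)⟩
  rw [hu, Finset.card_union_of_disjoint]
  rw [Finset.disjoint_left]
  rintro i hi hj
  simp only [Finset.mem_filter] at hi hj
  exact hd i ⟨hi.2, hj.2⟩

theorem step2 (n : ℕ) (c : ℕ → Bool) :
    ((((Finset.Icc 1 n).filter (fun i => c i = true)) ×ˢ
      ((Finset.Icc 1 n).filter (fun i => c i = false))).filter
      (fun p => p.1 % 2 = p.2 % 2)).card
  = (((Finset.Icc 1 n).filter (fun i => c i = true ∧ i % 2 = 0)).card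
      * ((Finset.Icc 1 n).filter (fun i => c i = false ∧ i % 2 = 0)).card)
  + (((Finset.Icc 1 n).filter (fun i => c i = true ∧ i % 2 = 1)).card
      * ((Finset.Icc 1 n).filter (fun i => c i = false ∧ i % 2 = 1)).card) := by
  have hu : (((Finset.Icc 1 n).filter (fun i => c i = true)) ×ˢ
      ((Finset.Icc 1 n).filter (fun i => c i = false))).filter
      (fun p => p.1 % 2 = p.2 % 2)
    = (((Finset.Icc 1 n).filter (fun i => c i = true ∧ i % 2 = 0)) ×ˢ
       ((Finset.Icc 1 n).filter (fun i => c i = false ∧ i % 2 = 0)))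
    ∪ (((Finset.Icc 1 n).filter (fun i => c i = true ∧ i % 2 = 1)) ×ˢ
       ((Finset.Icc 1 n).filter (fun i => c i = false ∧ i % 2 = 1))) := by
    ext ⟨a, b⟩
    simp only [Finset.mem_filter, Finset.mem_union, Finset.mem_product]
    constructor
    · rintro ⟨⟨⟨ha, hca⟩, hb, hcb⟩, hpar⟩
      rcases Nat.mod_two_eq_zero_or_one a with h|h
      · exact Or.inl ⟨⟨ha, hca, h⟩, hb, hcb, by omega⟩
      · exact Or.inr ⟨⟨ha, hca, h⟩, hb, hcb, by omega⟩
    · rintro (⟨⟨ha, hca, h1⟩, hb, hcb, h2⟩|⟨⟨ha, hca, h1⟩, hb, hcb, h2⟩) <;>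
        exact ⟨⟨⟨ha, hca⟩, hb, hcb⟩, by omega⟩
  rw [hu, Finset.card_union_of_disjoint, Finset.card_product, Finset.card_product]
  rw [Finset.disjoint_left]
  rintro ⟨a, b⟩ hi hj
  simp only [Finset.mem_product, Finset.mem_filter] at hi hj
  omega

/-- The number of non-monochromatic ordered pairs (x,z) with x < z and x ≡ z (mod 2)
is at most μ_R·μ_B/2 + n. -/
theorem same_parity_nonmono_bound (n : ℕ) (c : ℕ → Bool) :
    ((((Finset.Icc 1 n ×ˢ Finset.Icc 1 n).filter
        (fun p => p.1 < p.2 ∧ p.1 % 2 = p.2 % 2 ∧ c p.1 ≠ c p.2)).card : ℝ))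
      ≤ (((Finset.Icc 1 n).filter (fun i => c i = false)).card : ℝ)
          * (((Finset.Icc 1 n).filter (fun i => c i = true)).card : ℝ) / 2
        + n := by
  set I := Finset.Icc 1 n with hI
  set r0 := (I.filter (fun i => c i = true ∧ i % 2 = 0)).card with hr0
  set r1 := (I.filter (fun i => c i = true ∧ i % 2 = 1)).card with hr1
  set b0 := (I.filter (fun i => c i = false ∧ i % 2 = 0)).card with hb0
  set b1 := (I.filter (fun i => c i = false ∧ i % 2 = 1)).card with hb1
  have hcard : ((I ×ˢ I).filter
      (fun p => p.1 < p.2 ∧ p.1 % 2 = p.2 % 2 ∧ c p.1 ≠ c p.2)).card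
      = r0 * b0 + r1 * b1 := by
    rw [step1 n c, step2 n c]
  -- split counts
  have hr : (I.filter (fun i => c i = true)).card = r0 + r1 := by
    apply card_filter_partition
    · intro i; rcases Nat.mod_two_eq_zero_or_one i with h|h <;> simp [h]
    · intro i; omega
  have hb : (I.filter (fun i => c i = false)).card = b0 + b1 := by
    apply card_filter_partition
    · intro i; rcases Nat.mod_two_eq_zero_or_one i with h|h <;> simp [h]
    · intro i; omega
  have hE0 : (I.filter (fun i => i % 2 = 0)).card = r0 + b0 := by
    apply card_filter_partition
    · intro i; cases h : c i <;> simp [h]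
    · intro i; rintro ⟨⟨h1, -⟩, h2, -⟩; rw [h1] at h2; exact Bool.noConfusion h2
  have hE1 : (I.filter (fun i => i % 2 = 1)).card = r1 + b1 := by
    apply card_filter_partition
    · intro i; cases h : c i <;> simp [h]
    · intro i; rintro ⟨⟨h1, -⟩, h2, -⟩; rw [h1] at h2; exact Bool.noConfusion h2
  obtain ⟨hp0, hp1⟩ := parity_count n
  rw [hI] at hE0 hE1
  rw [hp0] at hE0
  rw [hp1] at hE1
  -- now pure arithmetic
  rw [hcard, hr, hb]
  push_cast
  have h0 : (r0 : ℝ) + b0 = (n / 2 : ℕ) := by exact_mod_cast hE0.symm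
  have h1 : (r1 : ℝ) + b1 = ((n + 1) / 2 : ℕ) := by exact_mod_cast hE1.symm
  have hsum : ((n / 2 : ℕ) : ℝ) + ((n + 1) / 2 : ℕ) = n := by
    have : n / 2 + (n + 1) / 2 = n := by omega
    exact_mod_cast this
  have hsq : (((n / 2 : ℕ) : ℝ) - ((n + 1) / 2 : ℕ)) ^ 2 ≤ n := by
    have hc : (n + 1) / 2 = n / 2 ∨ ((n + 1) / 2 = n / 2 + 1 ∧ 1 ≤ n) := by omega
    rcases hc with h | ⟨h, hn⟩
    · rw [h]; simp
    · rw [h]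
      push_cast
      have : (1 : ℝ) ≤ n := by exact_mod_cast hn
      nlinarith
  nlinarith [sq_nonneg (2 * ((r0 : ℝ) - r1) - (((n / 2 : ℕ) : ℝ) - ((n + 1) / 2 : ℕ))),
    hsq, hsum, h0, h1, Nat.cast_nonneg (α := ℝ) n]
end

section
/- For the 2-coloring of [1,n] (n divisible by 11) given by [R^{3n/11}, B^{7n/11}, R^{n/11}] (first 3n/11 red, next 7n/11 blue, last n/11 red), the number of monochromatic triples (x, y, x+2y), i.e. pairs (x,y) with x+2y ≤ n and c(x)=c(y)=c(x+2y), is n²/44 + O(n); precisely there is an absolute constant C with |#monochromatic − n²/44| ≤ C·n. -/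
open Finset

private def cnt (n N : ℕ) : ℕ :=
  ((Finset.Icc 1 n ×ˢ Finset.Icc 1 n).filter (fun p => p.1 + 2 * p.2 ≤ N)).card

private lemma cnt_eq_sum (n N : ℕ) (h : N ≤ n) :
    cnt n N = ∑ y ∈ Finset.Icc 1 (N / 2), (N - 2 * y) := by
  have : ∑ y ∈ Finset.Icc 1 (N / 2), (N - 2 * y)
      = ((Finset.Icc 1 (N / 2)).sigma (fun y => Finset.Icc 1 (N - 2 * y))).card := by
    rw [Finset.card_sigma]
    refine Finset.sum_congr rfl fun y hy => ?_
    rw [Nat.card_Icc]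
    simp at hy
    omega
  rw [this, cnt]
  refine Finset.card_bij' (fun p _ => ⟨p.2, p.1⟩) (fun q _ => (q.2, q.1)) ?_ ?_ ?_ ?_
  · intro p hp
    simp only [Finset.mem_filter, Finset.mem_product, Finset.mem_Icc] at hp
    simp only [Finset.mem_sigma, Finset.mem_Icc]
    omega
  · intro q hq
    simp only [Finset.mem_sigma, Finset.mem_Icc] at hq
    simp only [Finset.mem_filter, Finset.mem_product, Finset.mem_Icc]
    omega
  · intro p hp; rfl
  · intro q hq; rfl

private lemma gauss_sum (N : ℕ) : ∀ k : ℕ, 2 * k ≤ N →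
    (∑ y ∈ Finset.Icc 1 k, ((N : ℤ) - 2 * y)) = k * N - k * (k + 1) := by
  intro k
  induction k with
  | zero => simp
  | succ k ih =>
    intro h
    rw [Finset.sum_Icc_succ_top (by omega), ih (by omega)]
    push_cast
    ring

private lemma cnt_int (n N : ℕ) (h : N ≤ n) :
    (cnt n N : ℤ) = (N / 2 : ℕ) * N - (N / 2 : ℕ) * ((N / 2 : ℕ) + 1) := by
  rw [cnt_eq_sum n N h, Nat.cast_sum]
  rw [show (∑ y ∈ Finset.Icc 1 (N / 2), ((N - 2 * y : ℕ) : ℤ))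
      = ∑ y ∈ Finset.Icc 1 (N / 2), ((N : ℤ) - 2 * y) from
    Finset.sum_congr rfl fun y hy => by
      simp only [Finset.mem_Icc] at hy
      have : 2 * y ≤ N := by omega
      push_cast [this]; ring]
  exact gauss_sum N (N / 2) (by omega)

/-- The coloring [R^{3n/11}, B^{7n/11}, R^{n/11}] has n²/44 + O(n) monochromatic
triples (x, y, x+2y). -/
theorem optimal_coloring_x2y_count :
    ∃ C : ℝ, ∀ n : ℕ, 11 ∣ n →
      let c : ℕ → Bool := fun i =>
        if i ≤ 3 * n / 11 then false else if i ≤ 10 * n / 11 then true else false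
      |((((Finset.Icc 1 n ×ˢ Finset.Icc 1 n).filter
            (fun p => p.1 + 2 * p.2 ≤ n ∧ c p.1 = c p.2
              ∧ c p.2 = c (p.1 + 2 * p.2))).card : ℝ))
          - (n : ℝ) ^ 2 / 44| ≤ C * n := by
  use 11
  intro n hn
  obtain ⟨m, rfl⟩ := hn
  intro c
  have hc : ∀ z, c z = decide (3 * m < z ∧ z ≤ 10 * m) := by
    intro z
    show (if z ≤ 3 * (11 * m) / 11 then false else
        if z ≤ 10 * (11 * m) / 11 then true else false) = _
    have h1 : 3 * (11 * m) / 11 = 3 * m := by omega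
    have h2 : 10 * (11 * m) / 11 = 10 * m := by omega
    rw [h1, h2]
    split_ifs with ha hb
    · simp; omega
    · simp; omega
    · simp; omega
  -- decompose the count
  set P := Finset.Icc 1 (11 * m) ×ˢ Finset.Icc 1 (11 * m) with hP
  have hsplit : (P.filter (fun p => p.1 + 2 * p.2 ≤ 11 * m ∧ c p.1 = c p.2
        ∧ c p.2 = c (p.1 + 2 * p.2)))
      = P.filter (fun p => p.1 + 2 * p.2 ≤ 3 * m) ∪
        (P.filter (fun p => 3 * m < p.1 ∧ 3 * m < p.2 ∧ p.1 + 2 * p.2 ≤ 10 * m) ∪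
         P.filter (fun p => 10 * m < p.1 ∧ p.1 + 2 * p.2 ≤ 11 * m)) := by
    rw [← Finset.filter_or, ← Finset.filter_or]
    refine Finset.filter_congr fun p hp => ?_
    simp only [hP, Finset.mem_product, Finset.mem_Icc] at hp
    rw [hc p.1, hc p.2, hc (p.1 + 2 * p.2), decide_eq_decide, decide_eq_decide]
    omega
  have hd1 : Disjoint (P.filter (fun p => p.1 + 2 * p.2 ≤ 3 * m))
      ((P.filter (fun p => 3 * m < p.1 ∧ 3 * m < p.2 ∧ p.1 + 2 * p.2 ≤ 10 * m) ∪
        P.filter (fun p => 10 * m < p.1 ∧ p.1 + 2 * p.2 ≤ 11 * m))) := by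
    rw [Finset.disjoint_left]
    intro p h1 h2
    simp only [Finset.mem_union, Finset.mem_filter, hP, Finset.mem_product,
      Finset.mem_Icc] at h1 h2
    omega
  have hd2 : Disjoint (P.filter (fun p => 3 * m < p.1 ∧ 3 * m < p.2 ∧ p.1 + 2 * p.2 ≤ 10 * m))
      (P.filter (fun p => 10 * m < p.1 ∧ p.1 + 2 * p.2 ≤ 11 * m)) := by
    rw [Finset.disjoint_left]
    intro p h1 h2
    simp only [Finset.mem_filter, hP, Finset.mem_product, Finset.mem_Icc] at h1 h2
    omega
  have hB : (P.filter (fun p => 3 * m < p.1 ∧ 3 * m < p.2 ∧ p.1 + 2 * p.2 ≤ 10 * m)).card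
      = cnt (11 * m) m := by
    rw [cnt]
    refine Finset.card_bij' (fun p _ => (p.1 - 3 * m, p.2 - 3 * m))
      (fun q _ => (q.1 + 3 * m, q.2 + 3 * m)) ?_ ?_ ?_ ?_
    · intro p hp
      simp only [Finset.mem_filter, hP, Finset.mem_product, Finset.mem_Icc] at hp ⊢
      omega
    · intro q hq
      simp only [Finset.mem_filter, hP, Finset.mem_product, Finset.mem_Icc] at hq ⊢
      omega
    · intro p hp
      simp only [Finset.mem_filter, hP, Finset.mem_product, Finset.mem_Icc] at hp
      ext <;> simp <;> omega
    · intro q hq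
      simp only [Finset.mem_filter, hP, Finset.mem_product, Finset.mem_Icc] at hq
      ext <;> simp <;> omega
  have hC : (P.filter (fun p => 10 * m < p.1 ∧ p.1 + 2 * p.2 ≤ 11 * m)).card
      = cnt (11 * m) m := by
    rw [cnt]
    refine Finset.card_bij' (fun p _ => (11 * m + 1 - p.1 - 2 * p.2, p.2))
      (fun q _ => (11 * m + 1 - q.1 - 2 * q.2, q.2)) ?_ ?_ ?_ ?_
    · intro p hp
      simp only [Finset.mem_filter, hP, Finset.mem_product, Finset.mem_Icc] at hp ⊢
      omega
    · intro q hq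
      simp only [Finset.mem_filter, hP, Finset.mem_product, Finset.mem_Icc] at hq ⊢
      omega
    · intro p hp
      simp only [Finset.mem_filter, hP, Finset.mem_product, Finset.mem_Icc] at hp
      ext <;> simp <;> omega
    · intro q hq
      simp only [Finset.mem_filter, hP, Finset.mem_product, Finset.mem_Icc] at hq
      ext <;> simp <;> omega
  have hA : (P.filter (fun p => p.1 + 2 * p.2 ≤ 3 * m)).card = cnt (11 * m) (3 * m) := rfl
  have hcard : (P.filter (fun p => p.1 + 2 * p.2 ≤ 11 * m ∧ c p.1 = c p.2
        ∧ c p.2 = c (p.1 + 2 * p.2))).card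
      = cnt (11 * m) (3 * m) + (cnt (11 * m) m + cnt (11 * m) m) := by
    rw [hsplit, Finset.card_union_of_disjoint hd1, Finset.card_union_of_disjoint hd2,
      hA, hB, hC]
  rw [hcard]
  -- now numeric estimate
  have h3 : (cnt (11 * m) (3 * m) : ℤ)
      = (3 * m / 2 : ℕ) * (3 * m) - (3 * m / 2 : ℕ) * ((3 * m / 2 : ℕ) + 1) :=
    cnt_int _ _ (by omega)
  have h1 : (cnt (11 * m) m : ℤ)
      = (m / 2 : ℕ) * m - (m / 2 : ℕ) * ((m / 2 : ℕ) + 1) :=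
    cnt_int _ _ (by omega)
  set k3 : ℕ := 3 * m / 2 with hk3
  set k1 : ℕ := m / 2 with hk1
  have e3 : 2 * k3 ≤ 3 * m ∧ 3 * m ≤ 2 * k3 + 1 := by omega
  have e1 : 2 * k1 ≤ m ∧ m ≤ 2 * k1 + 1 := by omega
  have h3' : (cnt (11 * m) (3 * m) : ℝ) = (k3 : ℝ) * (3 * m) - k3 * (k3 + 1) := by
    have h := congrArg (fun z : ℤ => (z : ℝ)) h3
    push_cast at h
    linarith [h]
  have h1' : (cnt (11 * m) m : ℝ) = (k1 : ℝ) * m - k1 * (k1 + 1) := by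
    have h := congrArg (fun z : ℤ => (z : ℝ)) h1
    push_cast at h
    linarith [h]
  have hk3a : 2 * (k3 : ℝ) ≤ 3 * m := by exact_mod_cast e3.1
  have hk3b : 3 * (m : ℝ) ≤ 2 * k3 + 1 := by exact_mod_cast e3.2
  have hk1a : 2 * (k1 : ℝ) ≤ (m : ℝ) := by exact_mod_cast e1.1
  have hk1b : (m : ℝ) ≤ 2 * k1 + 1 := by exact_mod_cast e1.2
  have hk3n : (0:ℝ) ≤ k3 := by positivity
  have hk1n : (0:ℝ) ≤ k1 := by positivity
  push_cast
  rw [h3', h1', abs_le]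
  constructor <;> nlinarith [sq_nonneg ((m:ℝ)), sq_nonneg ((k3:ℝ) - 3*m/2), sq_nonneg ((k1:ℝ) - m/2)]
end

section
/- Fix an integer a ≥ 2 and let n be divisible by a(a+1)(a²+2a+3) so that the blocks below have integer lengths. Color [1,n] by [R, B, R] in proportions 1 : (a + 1/(a+1)) : 1/(a+1), i.e. with red block of length r·n where r = (a+1)/(a²+2a+3), etc. Then the number of monochromatic triples (x, y, x+ay), counted as pairs (x,y) with x + ay ≤ n and c(x)=c(y)=c(x+ay), equals n²/(2a(a²+2a+3)) + O(n). -/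
/-!
Write `n = d m` with `d = a² + 2a + 3`, so that the blocks are `[1, R]`, `(R, R + B]`, `(R + B, n]`
with `R = (a + 1) m`, `B = (a² + a + 1) m`. Since `a R < B` and `a ≥ 2`, a monochromatic triple
`(x, y, x + a y)` lies in the first red block, or in the blue block, or has `x` in the last red
block and `y` in the first. Each family is a translate of the triangle `{x, y ≥ 1, x + a y ≤ K}`,
with `K = R`, `B - a R = m` and `m` respectively, and that triangle has `K² / 2a + O(K)` points.
The main terms add up to `(R² + 2 m²) / 2a = d m² / 2a = n² / 2ad`.
-/

open Finset

def triangle (a K : ℕ) : Finset (ℕ × ℕ) :=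
  (Icc 1 K ×ˢ Icc 1 K).filter fun p => p.1 + a * p.2 ≤ K

lemma mem_triangle {a K : ℕ} (ha : 0 < a) {p : ℕ × ℕ} :
    p ∈ triangle a K ↔ 0 < p.1 ∧ 0 < p.2 ∧ p.1 + a * p.2 ≤ K := by
  have : p.2 ≤ a * p.2 := Nat.le_mul_of_pos_left p.2 ha
  simp only [triangle, mem_filter, mem_product, mem_Icc]
  omega

lemma card_triangle (a K : ℕ) (ha : 0 < a) :
    #(triangle a K) = ∑ y ∈ Icc 1 (K / a), (K - a * y) := by
  have hrow (y : ℕ) : #((Icc 1 K).filter fun x => x + a * y ≤ K) = K - a * y := by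
    rw [show (Icc 1 K).filter (fun x => x + a * y ≤ K) = Icc 1 (K - a * y) by
      ext x; simp only [mem_filter, mem_Icc]; omega]
    simp
  have hempty : ∀ y ∈ Icc 1 K, y ∉ Icc 1 (K / a) → K - a * y = 0 := by
    intro y hy hy'
    have : K / a < y := by simp only [mem_Icc] at hy hy'; omega
    rw [Nat.div_lt_iff_lt_mul ha, mul_comm] at this
    omega
  rw [triangle, card_filter, sum_product_right]
  simp_rw [← card_filter, hrow]
  exact (sum_subset (Icc_subset_Icc_right (Nat.div_le_self K a)) hempty).symm

lemma sum_Icc_one_natCast (q : ℕ) : ∑ i ∈ Icc 1 q, (i : ℝ) = q * (q + 1) / 2 := by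
  induction q with
  | zero => simp
  | succ q ih =>
    rw [sum_Icc_succ_top (by omega), ih]
    push_cast
    ring

lemma abs_card_triangle_sub_le (a K : ℕ) (ha : 0 < a) :
    |(#(triangle a K) : ℝ) - (K : ℝ) ^ 2 / (2 * a)| ≤ (K : ℝ) / 2 := by
  obtain ⟨q, r, hr, rfl⟩ : ∃ q r, r < a ∧ K = a * q + r :=
    ⟨K / a, K % a, Nat.mod_lt K ha, (Nat.div_add_mod K a).symm⟩
  have ha' : (0 : ℝ) < a := by exact_mod_cast ha
  have hq : (a * q + r) / a = q := by
    rw [Nat.mul_add_div ha, Nat.div_eq_of_lt hr, add_zero]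
  have hcard : (#(triangle a (a * q + r)) : ℝ) = a * q * (q - 1) / 2 + r * q := by
    have hterm : ∀ y ∈ Icc 1 q, ((a * q + r - a * y : ℕ) : ℝ) = a * q + r - a * y := by
      intro y hy
      rw [Nat.cast_sub (by simp only [mem_Icc] at hy; nlinarith)]
      push_cast
      ring
    rw [card_triangle _ _ ha, hq, Nat.cast_sum, sum_congr rfl hterm, sum_sub_distrib, sum_const,
      ← mul_sum, sum_Icc_one_natCast]
    simp only [Nat.card_Icc, add_tsub_cancel_right, smul_add, nsmul_eq_mul]
    ring
  have hdiff : (a * q * (q - 1) / 2 + r * q : ℝ) - ((a * q + r : ℕ) : ℝ) ^ 2 / (2 * a)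
      = -((a * q + r ^ 2 / a) / 2) := by
    push_cast
    field_simp
    ring
  have hr2 : (r : ℝ) ^ 2 / a ≤ r := by
    rw [div_le_iff₀ ha', sq]
    exact mul_le_mul_of_nonneg_left (by exact_mod_cast hr.le) (Nat.cast_nonneg r)
  rw [hcard, hdiff, abs_neg, abs_of_nonneg (by positivity)]
  push_cast
  linarith

lemma mem_map_triangle {a K : ℕ} (ha : 0 < a) (s t : ℕ) {p : ℕ × ℕ} :
    p ∈ (triangle a K).map (addRightEmbedding (s, t)) ↔
      s < p.1 ∧ t < p.2 ∧ p.1 + a * p.2 ≤ K + s + a * t := by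
  obtain ⟨x, y⟩ := p
  simp only [mem_map, addRightEmbedding_apply, Prod.exists, Prod.mk_add_mk, Prod.mk.injEq,
    mem_triangle ha]
  constructor
  · rintro ⟨u, v, h, rfl, rfl⟩
    rw [mul_add]
    omega
  · rintro ⟨hx, hy, hxy⟩
    refine ⟨x - s, y - t, ?_, by omega, by omega⟩
    have : a * t ≤ a * y := Nat.mul_le_mul_left a hy.le
    rw [Nat.mul_sub]
    omega

def blockColoring (R B i : ℕ) : Bool :=
  if i ≤ R then false else if i ≤ R + B then true else false

def monochromaticPairs (a n : ℕ) (c : ℕ → Bool) : Finset (ℕ × ℕ) :=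
  (Icc 1 n ×ˢ Icc 1 n).filter fun p =>
    p.1 + a * p.2 ≤ n ∧ c p.1 = c p.2 ∧ c p.2 = c (p.1 + a * p.2)

theorem monochromaticPairs_blockColoring (a R B L : ℕ) (ha : 2 ≤ a) (hB : a * R ≤ B)
    (hL : L ≤ R) :
    monochromaticPairs a (R + B + L) (blockColoring R B) =
      triangle a R ∪ (triangle a (B - a * R)).map (addRightEmbedding (R, R))
        ∪ (triangle a L).map (addRightEmbedding (R + B, 0)) := by
  have ha₀ : 0 < a := by omega
  ext ⟨x, y⟩
  have h2y : 2 * y ≤ a * y := Nat.mul_le_mul_right y ha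
  have hyR : y ≤ R → a * y ≤ a * R := Nat.mul_le_mul_left a
  rw [monochromaticPairs, mem_filter]
  simp only [blockColoring, mem_union, mem_product, mem_Icc, mem_triangle ha₀,
    mem_map_triangle ha₀, mul_zero, add_zero]
  split_ifs <;> simp only [and_true, and_false, false_iff, not_or, not_and] <;> omega

theorem card_monochromaticPairs_blockColoring (a R B L : ℕ) (ha : 2 ≤ a) (hB : a * R ≤ B)
    (hL : L ≤ R) :
    #(monochromaticPairs a (R + B + L) (blockColoring R B)) =
      #(triangle a R) + #(triangle a (B - a * R)) + #(triangle a L) := by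
  have ha₀ : 0 < a := by omega
  rw [monochromaticPairs_blockColoring a R B L ha hB hL, card_union_of_disjoint,
    card_union_of_disjoint, card_map, card_map]
  · rw [disjoint_left]
    rintro ⟨x, y⟩ h₁ h₂
    rw [mem_triangle ha₀] at h₁
    rw [mem_map_triangle ha₀] at h₂
    omega
  · rw [disjoint_left]
    rintro ⟨x, y⟩ h₁ h₂
    rw [mem_union, mem_triangle ha₀, mem_map_triangle ha₀] at h₁
    rw [mem_map_triangle ha₀] at h₂
    omega

theorem abs_card_monochromaticPairs_blockColoring_sub_le (a m : ℕ) (ha : 2 ≤ a) :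
    |(#(monochromaticPairs a ((a ^ 2 + 2 * a + 3) * m)
          (blockColoring ((a + 1) * m) ((a ^ 2 + a + 1) * m))) : ℝ)
        - (((a ^ 2 + 2 * a + 3) * m : ℕ) : ℝ) ^ 2 / (2 * a * ((a : ℝ) ^ 2 + 2 * a + 3))|
      ≤ (((a ^ 2 + 2 * a + 3) * m : ℕ) : ℝ) := by
  have ha₀ : 0 < a := by omega
  have hsplit : (a ^ 2 + a + 1) * m = a * ((a + 1) * m) + m := by ring
  have hB : (a ^ 2 + a + 1) * m - a * ((a + 1) * m) = m := by
    rw [hsplit, Nat.add_sub_cancel_left]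
  have hcount := card_monochromaticPairs_blockColoring a ((a + 1) * m) ((a ^ 2 + a + 1) * m) m
    ha (by rw [hsplit]; exact Nat.le_add_right _ _) (Nat.le_mul_of_pos_left m (by omega))
  rw [show (a + 1) * m + (a ^ 2 + a + 1) * m + m = (a ^ 2 + 2 * a + 3) * m by ring, hB]
    at hcount
  have hR := abs_le.mp (abs_card_triangle_sub_le a ((a + 1) * m) ha₀)
  have hm := abs_le.mp (abs_card_triangle_sub_le a m ha₀)
  have hmain : (((a ^ 2 + 2 * a + 3) * m : ℕ) : ℝ) ^ 2 / (2 * a * ((a : ℝ) ^ 2 + 2 * a + 3))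
      = (((a + 1) * m : ℕ) : ℝ) ^ 2 / (2 * a) + 2 * ((m : ℝ) ^ 2 / (2 * a)) := by
    push_cast
    field_simp
    ring
  have herror : ((a : ℝ) + 3) * m / 2 ≤ (a ^ 2 + 2 * a + 3) * m := by
    have : (0 : ℝ) ≤ m := Nat.cast_nonneg m
    nlinarith [sq_nonneg (a : ℝ)]
  rw [hcount, hmain, abs_le]
  push_cast at hR hm ⊢
  constructor <;> linarith

/-- The block coloring in proportions 1 : (a + 1/(a+1)) : 1/(a+1), i.e. with red
block of length (a+1)n/(a²+2a+3), blue block of length (a²+a+1)n/(a²+2a+3), red block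
of length n/(a²+2a+3), has n²/(2a(a²+2a+3)) + O(n) monochromatic triples (x,y,x+ay). -/
theorem optimal_coloring_xay_count (a : ℕ) (ha : 2 ≤ a) :
    ∃ C : ℝ, ∀ n : ℕ, a * (a + 1) * (a ^ 2 + 2 * a + 3) ∣ n →
      let d := a ^ 2 + 2 * a + 3
      let c : ℕ → Bool := fun i =>
        if i ≤ (a + 1) * n / d then false
        else if i ≤ (a + 1) * n / d + (a ^ 2 + a + 1) * n / d then true
        else false
      |((((Finset.Icc 1 n ×ˢ Finset.Icc 1 n).filter
            (fun p => p.1 + a * p.2 ≤ n ∧ c p.1 = c p.2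
              ∧ c p.2 = c (p.1 + a * p.2))).card : ℝ))
          - (n : ℝ) ^ 2 / (2 * a * ((a : ℝ) ^ 2 + 2 * a + 3))| ≤ C * n := by
  refine ⟨1, fun n hn => ?_⟩
  intro d c
  obtain ⟨m, rfl⟩ : d ∣ n := dvd_trans (Dvd.intro_left _ rfl) hn
  have hc : c = blockColoring ((a + 1) * m) ((a ^ 2 + a + 1) * m) := by
    funext i
    simp only [c, blockColoring, mul_left_comm _ d m,
      Nat.mul_div_cancel_left _ (by positivity : 0 < d)]
  rw [hc, one_mul]
  exact abs_card_monochromaticPairs_blockColoring_sub_le a m ha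
end

section
/- For all reals n > 0 and 0 ≤ μ_R ≤ n/2 with μ_B = n − μ_R, 0 ≤ μ_{R_1} ≤ n/2, and with γ₁n = μ_{B_1} = n/2 − μ_{R_1}, γn = μ_{R_1} − μ_{R_2} = 2μ_{R_1} − μ_R (assuming μ_{R_1} ≥ μ_R − μ_{R_1} ≥ 0 and μ_{B_1} ≤ μ_{R_1}), the quantity Δ = (1/2)(μ_Rμ_B/2 + μ_Rμ_{B_1} + μ_Bμ_{R_1} + 2A₁) with A₁ = (n/2 − γ₁n)·γ₁n − (γn)²/8 − μ_R²/8 satisfies Δ ≤ 5n²/22, with equality at μ_{R_1} = 3n/11, μ_R = 4n/11. -/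
/-- The Case-3A real optimization for x+2y=z: Δ ≤ 5n²/22, with equality at
μ_{R_1} = 3n/11, μ_R = 4n/11. -/
theorem case3A_optimization (n μR μR1 : ℝ) (hn : 0 < n)
    (hR0 : 0 ≤ μR) (hRn : μR ≤ n / 2) (hR10 : 0 ≤ μR1) (hR1n : μR1 ≤ n / 2)
    (hR2 : 0 ≤ μR - μR1) (hR12 : μR - μR1 ≤ μR1) (hB1 : n / 2 - μR1 ≤ μR1) :
    (1 / 2) * (μR * (n - μR) / 2 + μR * (n / 2 - μR1) + (n - μR) * μR1
        + 2 * ((n / 2 - (n / 2 - μR1)) * (n / 2 - μR1)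
          - (2 * μR1 - μR) ^ 2 / 8 - μR ^ 2 / 8))
      ≤ 5 * n ^ 2 / 22
    ∧ (μR1 = 3 * n / 11 → μR = 4 * n / 11 →
      (1 / 2) * (μR * (n - μR) / 2 + μR * (n / 2 - μR1) + (n - μR) * μR1
          + 2 * ((n / 2 - (n / 2 - μR1)) * (n / 2 - μR1)
            - (2 * μR1 - μR) ^ 2 / 8 - μR ^ 2 / 8))
        = 5 * n ^ 2 / 22) := by
  constructor
  · nlinarith [sq_nonneg (μR - 4 * n / 11 + (μR1 - 3 * n / 11) / 2),
      sq_nonneg (μR1 - 3 * n / 11)]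
  · rintro rfl rfl; ring
end
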